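/- Let f : [a,b] → ℝ with f^{(n−1)} absolutely continuous and γ_n ≤ f^{(n)}(t) ≤ Γ_n for a.e. t ∈ [a,b]. Then for every x ∈ [a,b], |∫_a^b f(t) dt − Σ_{k=0}^{n−1}(1/(k+1)!)[(x−a)^{k+1} f^{(k)}(a) + (−1)^k (b−x)^{k+1} f^{(k)}(b)] − (1/(n+1)!)·((Γ_n+γ_n)/2)·[(x−a)^{n+1} + (−1)^n (b−x)^{n+1}]| ≤ ((Γ_n−γ_n)/(2(n+1)!))[(x−a)^{n+1} + (b−x)^{n+1}]. -/

import Mathlib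

open MeasureTheory Set intervalIntegral

lemma aux_cont1 (x : ℝ) (n : ℕ) : Continuous (fun t : ℝ => (x - t) ^ n) :=
  (continuous_const.sub continuous_id).pow n

lemma aux_taylor_id (a b x : ℝ) (n : ℕ) (fd : ℕ → ℝ → ℝ) (hab : a ≤ b)
    (hderiv : ∀ k < n, ∀ x ∈ Icc a b, HasDerivAt (fd k) (fd (k + 1) x) x)
    (hint : IntervalIntegrable (fd n) volume a b) :
    ∀ m ≤ n, ∫ t in a..b, fd 0 t =
      (∑ k ∈ Finset.range m,
        (1 / (Nat.factorial (k + 1) : ℝ)) *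
          ((x - a) ^ (k + 1) * fd k a + (-1 : ℝ) ^ k * (b - x) ^ (k + 1) * fd k b)) +
      (1 / (Nat.factorial m : ℝ)) * ∫ t in a..b, fd m t * (x - t) ^ m := by
  have hI : ∀ m ≤ n, IntervalIntegrable (fd m) volume a b := by
    intro m hm
    rcases eq_or_lt_of_le hm with rfl | hm
    · exact hint
    · refine ContinuousOn.intervalIntegrable ?_
      rw [uIcc_of_le hab]
      exact fun t ht => ((hderiv m hm t ht).continuousAt).continuousWithinAt
  intro m hm
  induction m with
  | zero => simp
  | succ m ih =>
    rw [ih (le_of_lt (Nat.lt_of_succ_le hm))]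
    have hvderiv : ∀ t : ℝ, HasDerivAt
        (fun t => -((x - t) ^ (m + 1)) / (m + 1)) ((x - t) ^ m) t := by
      intro t
      have h1 : HasDerivAt (fun t : ℝ => x - t) (-1) t := (hasDerivAt_id t).const_sub x
      have h2 := ((h1.pow (m + 1)).neg).div_const ((m : ℝ) + 1)
      refine h2.congr_deriv ?_
      have hne : ((m : ℝ) + 1) ≠ 0 := by positivity
      push_cast
      field_simp
    have hparts := intervalIntegral.integral_mul_deriv_eq_deriv_mul
      (u := fd m) (u' := fd (m + 1))
      (v := fun t => -((x - t) ^ (m + 1)) / (m + 1)) (v' := fun t => (x - t) ^ m)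
      (fun t ht => hderiv m (Nat.lt_of_succ_le hm) t (by rwa [uIcc_of_le hab] at ht))
      (fun t _ => hvderiv t)
      (hI (m + 1) hm)
      ((aux_cont1 x m).intervalIntegrable a b)
    rw [Finset.sum_range_succ, hparts]
    have e1 : (∫ t in a..b, fd (m + 1) t * (-((x - t) ^ (m + 1)) / (m + 1)))
        = (-((m : ℝ) + 1)⁻¹) • ∫ t in a..b, fd (m + 1) t * (x - t) ^ (m + 1) := by
      rw [← intervalIntegral.integral_smul]
      congr 1
      funext t
      simp only [smul_eq_mul]
      ring
    rw [e1]
    have hfm : (Nat.factorial (m + 1) : ℝ) = (Nat.factorial m : ℝ) * (m + 1) := by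
      push_cast [Nat.factorial_succ]
      ring
    have hne : ((m : ℝ) + 1) ≠ 0 := by positivity
    have hne2 : (Nat.factorial m : ℝ) ≠ 0 := by positivity
    beta_reduce
    have hxb : (x - b) ^ (m + 1) = -((-1 : ℝ) ^ m * (b - x) ^ (m + 1)) := by
      have h : x - b = -(b - x) := by ring
      rw [h, neg_pow]
      ring
    rw [smul_eq_mul, hfm, hxb]
    field_simp
    ring
lemma aux_cont2 (x : ℝ) (n : ℕ) : Continuous (fun t : ℝ => (t - x) ^ n) :=
  (continuous_id.sub continuous_const).pow n

lemma aux_xt_pow (x c d : ℝ) (n : ℕ) :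
    ∫ t in c..d, (x - t) ^ n = ((x - c) ^ (n + 1) - (x - d) ^ (n + 1)) / (n + 1) := by
  have key : ∀ t : ℝ, HasDerivAt (fun t => -((x - t) ^ (n + 1)) / (n + 1)) ((x - t) ^ n) t := by
    intro t
    have h1 : HasDerivAt (fun t : ℝ => x - t) (-1) t := (hasDerivAt_id t).const_sub x
    have h2 := ((h1.pow (n + 1)).neg).div_const ((n : ℝ) + 1)
    refine h2.congr_deriv ?_
    have hne : ((n : ℝ) + 1) ≠ 0 := by positivity
    push_cast
    field_simp
  rw [intervalIntegral.integral_eq_sub_of_hasDerivAt (fun t _ => key t)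
    ((aux_cont1 x n).intervalIntegrable c d)]
  ring

lemma aux_tx_pow (x c d : ℝ) (n : ℕ) :
    ∫ t in c..d, (t - x) ^ n = ((d - x) ^ (n + 1) - (c - x) ^ (n + 1)) / (n + 1) := by
  have key : ∀ t : ℝ, HasDerivAt (fun t => (t - x) ^ (n + 1) / (n + 1)) ((t - x) ^ n) t := by
    intro t
    have h1 : HasDerivAt (fun t : ℝ => t - x) 1 t := (hasDerivAt_id t).sub_const x
    have h2 := (h1.pow (n + 1)).div_const ((n : ℝ) + 1)
    refine h2.congr_deriv ?_
    have hne : ((n : ℝ) + 1) ≠ 0 := by positivity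
    push_cast
    field_simp
  rw [intervalIntegral.integral_eq_sub_of_hasDerivAt (fun t _ => key t)
    ((aux_cont2 x n).intervalIntegrable c d)]
  ring

theorem perturbed_endpoint_taylor_inequality
    (a b γn Γn : ℝ) (n : ℕ) (fd : ℕ → ℝ → ℝ) (hab : a < b) (hn : 1 ≤ n)
    (hderiv : ∀ k < n, ∀ x ∈ Icc a b, HasDerivAt (fd k) (fd (k + 1) x) x)
    (hint : IntervalIntegrable (fd n) volume a b)
    (hbound : ∀ᵐ t ∂volume, t ∈ Icc a b → γn ≤ fd n t ∧ fd n t ≤ Γn) :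
    ∀ x ∈ Icc a b,
      |(∫ t in a..b, fd 0 t) -
          (∑ k ∈ Finset.range n,
            (1 / (Nat.factorial (k + 1) : ℝ)) *
              ((x - a) ^ (k + 1) * fd k a + (-1 : ℝ) ^ k * (b - x) ^ (k + 1) * fd k b)) -
          (1 / (Nat.factorial (n + 1))) * ((Γn + γn) / 2) *
            ((x - a) ^ (n + 1) + (-1 : ℝ) ^ n * (b - x) ^ (n + 1))| ≤
        ((Γn - γn) / (2 * Nat.factorial (n + 1))) *
          ((x - a) ^ (n + 1) + (b - x) ^ (n + 1)) := by
  intro x hx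
  obtain ⟨hax, hxb⟩ := hx
  set m := (Γn + γn) / 2 with hm
  -- integrability facts
  have hI1 : IntervalIntegrable (fun t => fd n t * (x - t) ^ n) volume a b :=
    hint.mul_continuousOn ((aux_cont1 x n).continuousOn)
  have hI2 : IntervalIntegrable (fun t => m * (x - t) ^ n) volume a b :=
    ((continuous_const.mul (aux_cont1 x n))).intervalIntegrable a b
  have hI3 : IntervalIntegrable (fun t => (fd n t - m) * (x - t) ^ n) volume a b := by
    have := hI1.sub hI2
    refine this.congr ?_
    intro t _
    simp [sub_mul]
  -- step 1: the identity
  have hid := aux_taylor_id a b x n fd hab.le hderiv hint n le_rfl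
  -- value of ∫ (x-t)^n
  have hP : ∫ t in a..b, (x - t) ^ n =
      ((x - a) ^ (n + 1) + (-1 : ℝ) ^ n * (b - x) ^ (n + 1)) / (n + 1) := by
    rw [aux_xt_pow]
    have hxb' : (x - b) ^ (n + 1) = -((-1 : ℝ) ^ n * (b - x) ^ (n + 1)) := by
      have h : x - b = -(b - x) := by ring
      rw [h, neg_pow]
      ring
    rw [hxb']
    ring
  have hfac : (Nat.factorial (n + 1) : ℝ) = (Nat.factorial n : ℝ) * (n + 1) := by
    push_cast [Nat.factorial_succ]
    ring
  have hne : ((n : ℝ) + 1) ≠ 0 := by positivity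
  have hne2 : (Nat.factorial n : ℝ) ≠ 0 := by positivity
  -- rewrite the expression inside the absolute value
  have hE : (∫ t in a..b, fd 0 t) -
          (∑ k ∈ Finset.range n,
            (1 / (Nat.factorial (k + 1) : ℝ)) *
              ((x - a) ^ (k + 1) * fd k a + (-1 : ℝ) ^ k * (b - x) ^ (k + 1) * fd k b)) -
          (1 / (Nat.factorial (n + 1))) * ((Γn + γn) / 2) *
            ((x - a) ^ (n + 1) + (-1 : ℝ) ^ n * (b - x) ^ (n + 1)) =
      (1 / (Nat.factorial n : ℝ)) * ∫ t in a..b, (fd n t - m) * (x - t) ^ n := by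
    have hsplit : ∫ t in a..b, (fd n t - m) * (x - t) ^ n =
        (∫ t in a..b, fd n t * (x - t) ^ n) - ∫ t in a..b, m * (x - t) ^ n := by
      rw [← intervalIntegral.integral_sub hI1 hI2]
      congr 1
      funext t
      ring
    have hconst : ∫ t in a..b, m * (x - t) ^ n = m * ∫ t in a..b, (x - t) ^ n := by
      simp [intervalIntegral.integral_const_mul]
    rw [hid, hsplit, hconst, hP, hfac, ← hm]
    field_simp
    ring
  rw [hE]
  -- step 2: bound
  have habs : |(1 / (Nat.factorial n : ℝ)) * ∫ t in a..b, (fd n t - m) * (x - t) ^ n| ≤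
      (1 / (Nat.factorial n : ℝ)) * ∫ t in a..b, ((Γn - γn) / 2) * |x - t| ^ n := by
    rw [abs_mul, abs_of_nonneg (by positivity : (0:ℝ) ≤ 1 / (Nat.factorial n : ℝ))]
    gcongr
    refine le_trans (intervalIntegral.abs_integral_le_integral_abs hab.le) ?_
    refine intervalIntegral.integral_mono_ae_restrict hab.le hI3.abs
      ((continuous_const.mul ((continuous_const.sub continuous_id).abs.pow n)).intervalIntegrable a b) ?_
    filter_upwards [MeasureTheory.ae_restrict_mem measurableSet_Icc,
      MeasureTheory.ae_restrict_of_ae hbound] with t ht hb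
    have ⟨h1, h2⟩ := hb ht
    have hd : |fd n t - m| ≤ (Γn - γn) / 2 := by
      rw [abs_le]
      constructor <;> [linarith; linarith]
    calc |(fd n t - m) * (x - t) ^ n| = |fd n t - m| * |x - t| ^ n := by
          rw [abs_mul, abs_pow]
      _ ≤ ((Γn - γn) / 2) * |x - t| ^ n := by
          have : (0:ℝ) ≤ |x - t| ^ n := by positivity
          gcongr
  refine le_trans habs ?_
  -- compute ∫ |x - t|^n
  have hQ : ∫ t in a..b, |x - t| ^ n =
      ((x - a) ^ (n + 1) + (b - x) ^ (n + 1)) / (n + 1) := by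
    have c1 : IntervalIntegrable (fun t : ℝ => |x - t| ^ n) volume a x :=
      ((continuous_const.sub continuous_id).abs.pow n).intervalIntegrable a x
    have c2 : IntervalIntegrable (fun t : ℝ => |x - t| ^ n) volume x b :=
      ((continuous_const.sub continuous_id).abs.pow n).intervalIntegrable x b
    rw [← intervalIntegral.integral_add_adjacent_intervals c1 c2]
    have e1 : ∫ t in a..x, |x - t| ^ n = ∫ t in a..x, (x - t) ^ n := by
      refine intervalIntegral.integral_congr ?_
      intro t ht
      rw [uIcc_of_le hax] at ht
      beta_reduce
      rw [abs_of_nonneg (by linarith [ht.2] : (0:ℝ) ≤ x - t)]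
    have e2 : ∫ t in x..b, |x - t| ^ n = ∫ t in x..b, (t - x) ^ n := by
      refine intervalIntegral.integral_congr ?_
      intro t ht
      rw [uIcc_of_le hxb] at ht
      beta_reduce
      rw [abs_sub_comm, abs_of_nonneg (by linarith [ht.1] : (0:ℝ) ≤ t - x)]
    rw [e1, e2, aux_xt_pow, aux_tx_pow]
    simp
    ring
  refine le_of_eq ?_
  rw [intervalIntegral.integral_const_mul, hQ, hfac]
  field_simp
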